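/- arXiv:1904.13380 — 8 statements merged into one kernel-verified Lean document; each statement's English description precedes it below -/
import Mathlib

section
/- Let m ≥ 0 be an integer and ν > 1/2. For every x > 0, x^{ν+m}K_ν(x) ≤ (m² + (2ν−1)m)^{m/2} · 2^{ν−1}Γ(ν), where for m = 0 the first factor is interpreted as 1. (This is Lemma 2.3(v) of the paper, with the constant normalized so that it matches the small-argument limit lim_{x→0⁺} x^ν K_ν(x) = 2^{ν−1}Γ(ν).) -/
open MeasureTheory

/-- The modified Bessel function of the second kind, via the integral representation
`K_ν(x) = (Γ(ν+1/2)(2x)^ν/√π) ∫₀^∞ cos(y)/(y²+x²)^{ν+1/2} dy`, valid for `ν > −1/2`, `x > 0`. -/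
noncomputable def besselK (ν x : ℝ) : ℝ :=
  (Real.Gamma (ν + 1 / 2) * (2 * x) ^ ν / Real.sqrt Real.pi) *
    ∫ y in Set.Ioi (0 : ℝ), Real.cos y / (y ^ 2 + x ^ 2) ^ (ν + 1 / 2)

open Real Set

/-!
Subordinating `(y² + x²)^(-ν-1/2)` to a Gamma integral and integrating the cosine against the
resulting Gaussian in `y` (Fubini) gives the representation
`K_ν(x) = 2^(ν-1) x^(-ν) ∫₀^∞ u^(ν-1) exp(-u - x²/(4u)) du`.
Hence `x^(ν+m) K_ν(x) = 2^(ν-1) ∫₀^∞ u^(ν-1) e^(-u) · x^m e^(-x²/(4u)) du`, and the elementary bound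
`x^m e^(-x²/(4u)) ≤ (2mu)^(m/2)` (from `z ≤ e^z`) turns the integral into `(2m)^(m/2) Γ(ν + m/2)`.
Log-convexity of `Γ` gives `Γ(ν + m/2) ≤ Γ(ν) (ν + (m-1)/2)^(m/2)`, and
`2m (ν + (m-1)/2) = m² + (2ν-1)m`.
-/

lemma integral_cos_mul_exp_neg_mul_sq {c : ℝ} (hc : 0 < c) :
    ∫ y : ℝ, cos y * exp (-c * y ^ 2) = √(π / c) * exp (-(1 / (4 * c))) := by
  have h := fourierIntegral_gaussian (b := (c : ℂ)) (by simpa using hc) 1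
  have hint : Integrable fun y : ℝ => Complex.exp (Complex.I * 1 * y) * Complex.exp (-c * y ^ 2) :=
    .of_integral_ne_zero (by rw [h]; simp [Complex.exp_ne_zero, pi_ne_zero, hc.ne'])
  have hre : ∀ y : ℝ, (Complex.exp (Complex.I * 1 * y) * Complex.exp (-c * y ^ 2)).re
      = cos y * exp (-c * y ^ 2) := fun y => by
    rw [show -(c : ℂ) * y ^ 2 = ((-c * y ^ 2 : ℝ) : ℂ) by push_cast; ring, ← Complex.ofReal_exp,
      Complex.re_mul_ofReal, mul_one, mul_comm Complex.I, Complex.exp_ofReal_mul_I_re]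
  have hrhs : (π / c : ℂ) ^ (1 / 2 : ℂ) * Complex.exp (-1 ^ 2 / (4 * c))
      = ((√(π / c) * exp (-(1 / (4 * c))) : ℝ) : ℂ) := by
    rw [sqrt_eq_rpow, Complex.ofReal_mul, Complex.ofReal_cpow (by positivity), Complex.ofReal_exp]
    push_cast
    ring_nf
  simpa only [hre, h, hrhs, RCLike.re_to_complex, Complex.ofReal_re] using integral_re hint

lemma integral_Ioi_cos_mul_exp_neg_mul_sq {c : ℝ} (hc : 0 < c) :
    ∫ y in Ioi 0, cos y * exp (-c * y ^ 2) = √(π / c) * exp (-(1 / (4 * c))) / 2 := by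
  have h := integral_comp_abs (f := fun y => cos y * exp (-c * y ^ 2))
  simp only [cos_abs, sq_abs] at h
  rw [integral_cos_mul_exp_neg_mul_sq hc] at h
  linarith

lemma integral_Ioi_cos_mul_exp_neg_one_add_div_sq_mul {x u : ℝ} (hx : 0 < x) (hu : 0 < u) :
    ∫ y in Ioi 0, cos y * exp (-((1 + (y / x) ^ 2) * u))
      = √π * x / (2 * √u) * exp (-u - x ^ 2 / (4 * u)) := by
  have hsplit : ∀ y, cos y * exp (-((1 + (y / x) ^ 2) * u))
      = exp (-u) * (cos y * exp (-(u / x ^ 2) * y ^ 2)) := fun y => by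
    rw [show -((1 + (y / x) ^ 2) * u) = -u + -(u / x ^ 2) * y ^ 2 by field_simp; ring, exp_add]
    ring
  simp_rw [hsplit, integral_const_mul,
    integral_Ioi_cos_mul_exp_neg_mul_sq (by positivity : 0 < u / x ^ 2)]
  rw [div_div_eq_mul_div, sqrt_div' _ hu.le, sqrt_mul pi_pos.le, sqrt_sq hx.le,
    show -(1 / (4 * (u / x ^ 2))) = -(x ^ 2 / (4 * u)) by field_simp, sub_eq_add_neg, exp_add]
  field_simp

lemma integrable_one_add_div_sq_rpow_neg {s x : ℝ} (hs : 1 / 2 < s) (hx : x ≠ 0) :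
    Integrable fun y : ℝ => (1 + (y / x) ^ 2) ^ (-s) := by
  have h := (integrable_rpow_neg_one_add_norm_sq (E := ℝ) (μ := volume) (r := 2 * s)
    (by simp; linarith)).comp_div hx
  simpa only [norm_eq_abs, sq_abs, neg_div, mul_div_cancel_left₀ s two_ne_zero] using h

lemma integrable_cos_mul_rpow_mul_exp_neg_one_add_div_sq {s x : ℝ} (hs : 1 / 2 < s) (hx : x ≠ 0) :
    Integrable (fun p : ℝ × ℝ => cos p.1 * (p.2 ^ (s - 1) * exp (-((1 + (p.1 / x) ^ 2) * p.2))))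
      ((volume.restrict (Ioi 0)).prod (volume.restrict (Ioi 0))) := by
  set G : ℝ × ℝ → ℝ := fun p => p.2 ^ (s - 1) * exp (-((1 + (p.1 / x) ^ 2) * p.2))
  have hc : ∀ y : ℝ, 0 < 1 + (y / x) ^ 2 := fun y => by positivity
  have hG_y : ∀ y, ∫ u in Ioi 0, G (y, u) = (1 + (y / x) ^ 2) ^ (-s) * Gamma s := fun y => by
    rw [integral_rpow_mul_exp_neg_mul_Ioi (by linarith) (hc y), one_div, inv_rpow (hc y).le,
      rpow_neg (hc y).le]
  have hG : Integrable G ((volume.restrict (Ioi 0)).prod (volume.restrict (Ioi 0))) := by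
    refine (integrable_prod_iff (by fun_prop : Measurable G).aestronglyMeasurable).2
      ⟨Filter.Eventually.of_forall fun y => .of_integral_ne_zero ?_, ?_⟩
    · rw [hG_y]; exact (mul_pos (rpow_pos_of_pos (hc y) _) (Gamma_pos_of_pos (by linarith))).ne'
    refine ((integrable_one_add_div_sq_rpow_neg hs hx).integrableOn.mul_const
      (Gamma s)).congr (Filter.Eventually.of_forall fun y => ?_)
    show (1 + (y / x) ^ 2) ^ (-s) * Gamma s = ∫ u in Ioi 0, ‖G (y, u)‖
    rw [← hG_y]
    exact setIntegral_congr_fun measurableSet_Ioi fun u (hu : 0 < u) =>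
      (norm_of_nonneg (by positivity)).symm
  exact hG.bdd_mul (c := 1) (continuous_cos.comp continuous_fst).aestronglyMeasurable
    (Filter.Eventually.of_forall fun p => by simpa using abs_cos_le_one p.1)

theorem Gamma_mul_integral_Ioi_cos_mul_one_add_div_sq_rpow {ν x : ℝ} (hν : 0 < ν) (hx : 0 < x) :
    Gamma (ν + 1 / 2) * ∫ y in Ioi 0, cos y * (1 + (y / x) ^ 2) ^ (-(ν + 1 / 2))
      = √π * x / 2 * ∫ u in Ioi 0, u ^ (ν - 1) * exp (-u - x ^ 2 / (4 * u)) := by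
  set s := ν + 1 / 2 with hs_def
  have hc : ∀ y : ℝ, 0 < 1 + (y / x) ^ 2 := fun y => by positivity
  calc Gamma s * ∫ y in Ioi 0, cos y * (1 + (y / x) ^ 2) ^ (-s)
      = ∫ y in Ioi 0, ∫ u in Ioi 0, cos y * (u ^ (s - 1) * exp (-((1 + (y / x) ^ 2) * u))) := by
        rw [← integral_const_mul]
        refine integral_congr_ae (Filter.Eventually.of_forall fun y => ?_)
        dsimp only
        rw [integral_const_mul, integral_rpow_mul_exp_neg_mul_Ioi (by linarith) (hc y), one_div,
          inv_rpow (hc y).le, rpow_neg (hc y).le]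
        ring
    _ = ∫ u in Ioi 0, ∫ y in Ioi 0, cos y * (u ^ (s - 1) * exp (-((1 + (y / x) ^ 2) * u))) :=
        integral_integral_swap
          (integrable_cos_mul_rpow_mul_exp_neg_one_add_div_sq (by linarith) hx.ne')
    _ = ∫ u in Ioi 0, √π * x / 2 * (u ^ (ν - 1) * exp (-u - x ^ 2 / (4 * u))) := by
        refine setIntegral_congr_fun measurableSet_Ioi fun u (hu : 0 < u) => ?_
        simp_rw [mul_left_comm (cos _), integral_const_mul,
          integral_Ioi_cos_mul_exp_neg_one_add_div_sq_mul hx hu]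
        rw [hs_def, show ν + 1 / 2 - 1 = ν - 1 + 1 / 2 by ring, rpow_add hu, ← sqrt_eq_rpow]
        field_simp [(sqrt_pos.2 hu).ne']
    _ = _ := integral_const_mul _ _

theorem besselK_eq_integral {ν x : ℝ} (hν : 0 < ν) (hx : 0 < x) :
    besselK ν x
      = 2 ^ (ν - 1) * x ^ (-ν) * ∫ u in Ioi 0, u ^ (ν - 1) * exp (-u - x ^ 2 / (4 * u)) := by
  set s := ν + 1 / 2 with hs_def
  have hcos : ∫ y in Ioi 0, cos y / (y ^ 2 + x ^ 2) ^ s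
      = x ^ (-2 * s) * ∫ y in Ioi 0, cos y * (1 + (y / x) ^ 2) ^ (-s) := by
    rw [← integral_const_mul]
    refine setIntegral_congr_fun measurableSet_Ioi fun y _ => ?_
    rw [show y ^ 2 + x ^ 2 = x ^ 2 * (1 + (y / x) ^ 2) by field_simp; ring,
      mul_rpow (by positivity) (by positivity), neg_mul, rpow_neg hx.le, rpow_neg (by positivity),
      ← rpow_natCast, ← rpow_mul hx.le]
    push_cast
    field_simp
  have hI := Gamma_mul_integral_Ioi_cos_mul_one_add_div_sq_rpow hν hx
  rw [besselK, hcos, mul_rpow zero_le_two hx.le]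
  set I := ∫ y in Ioi 0, cos y * (1 + (y / x) ^ 2) ^ (-s)
  set J := ∫ u in Ioi 0, u ^ (ν - 1) * exp (-u - x ^ 2 / (4 * u))
  clear_value I J
  calc Gamma s * (2 ^ ν * x ^ ν) / √π * (x ^ (-2 * s) * I)
      = 2 ^ ν * (x ^ ν * x ^ (-2 * s)) / √π * (Gamma s * I) := by ring
    _ = _ := by
        rw [hI, ← rpow_add hx, show ν + -2 * s = -ν - 1 by rw [hs_def]; ring, rpow_sub hx,
          rpow_sub two_pos, rpow_one, rpow_one]
        field_simp [(sqrt_pos.2 pi_pos).ne']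

lemma rpow_mul_exp_neg_sq_div_le {p x u : ℝ} (hp : 0 ≤ p) (hx : 0 ≤ x) (hu : 0 < u) :
    x ^ p * exp (-(x ^ 2 / (4 * u))) ≤ (2 * p * u) ^ (p / 2) := by
  rcases hp.eq_or_lt with rfl | hp
  · simp only [rpow_zero, one_mul, zero_div, exp_le_one_iff, neg_nonpos]
    positivity
  set z := x ^ 2 / (2 * p * u) with hz_def
  have hz : 0 ≤ z := by positivity
  have hxp : x ^ p = (2 * p * u) ^ (p / 2) * z ^ (p / 2) := by
    rw [← mul_rpow (by positivity) hz, mul_div_cancel₀ _ (by positivity), ← rpow_natCast,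
      ← rpow_mul hx]
    congr 1
    ring
  have hzexp : z ^ (p / 2) ≤ exp (x ^ 2 / (4 * u)) := by
    calc z ^ (p / 2) ≤ exp z ^ (p / 2) := by
          gcongr; linarith [add_one_le_exp z]
      _ = exp (x ^ 2 / (4 * u)) := by rw [← exp_mul, hz_def]; congr 1; field_simp; ring
  calc x ^ p * exp (-(x ^ 2 / (4 * u)))
      ≤ (2 * p * u) ^ (p / 2) * exp (x ^ 2 / (4 * u)) * exp (-(x ^ 2 / (4 * u))) := by
        rw [hxp]; gcongr
    _ = (2 * p * u) ^ (p / 2) := by rw [mul_assoc, ← exp_add, add_neg_cancel, exp_zero, mul_one]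

lemma rpow_mul_integral_Ioi_rpow_mul_exp_le {ν p x : ℝ} (hν : 0 < ν) (hp : 0 ≤ p) (hx : 0 ≤ x) :
    x ^ p * ∫ u in Ioi 0, u ^ (ν - 1) * exp (-u - x ^ 2 / (4 * u))
      ≤ (2 * p) ^ (p / 2) * Gamma (ν + p / 2) := by
  rw [Gamma_eq_integral (by positivity), ← integral_const_mul, ← integral_const_mul]
  refine integral_mono_of_nonneg ((ae_restrict_mem measurableSet_Ioi).mono fun u (hu : 0 < u) => ?_)
    ((GammaIntegral_convergent (by positivity)).const_mul _)
    ((ae_restrict_mem measurableSet_Ioi).mono fun u (hu : 0 < u) => ?_)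
  · positivity
  calc x ^ p * (u ^ (ν - 1) * exp (-u - x ^ 2 / (4 * u)))
      = u ^ (ν - 1) * exp (-u) * (x ^ p * exp (-(x ^ 2 / (4 * u)))) := by
        rw [exp_sub, exp_neg (x ^ 2 / _), div_eq_mul_inv]; ring
    _ ≤ u ^ (ν - 1) * exp (-u) * (2 * p * u) ^ (p / 2) := by
        gcongr; exact rpow_mul_exp_neg_sq_div_le hp hx hu
    _ = (2 * p) ^ (p / 2) * (exp (-u) * u ^ (ν + p / 2 - 1)) := by
        rw [mul_rpow (by positivity) hu.le, show ν + p / 2 - 1 = ν - 1 + p / 2 by ring, rpow_add hu]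
        ring

lemma Gamma_add_le_mul_rpow {a h : ℝ} (ha : 0 < a) (hh : 1 / 2 ≤ h) :
    Gamma (a + h) ≤ Gamma a * (a + h - 1 / 2) ^ h := by
  set c := a + h - 1 / 2 with hc_def
  have hc : 0 < c := by linarith
  have hΓa := Gamma_pos_of_pos ha
  have hconv := convexOn_log_Gamma
  -- the slope of `log ∘ Gamma` on `[a, a + h]` is at most its slope `log c` on `[c, c + 1]`
  have h₁ : slope (log ∘ Gamma) a (a + h) ≤ slope (log ∘ Gamma) a (c + 1) :=
    hconv.slope_mono ha ⟨by simp; linarith, by simp; linarith⟩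
      ⟨by simp; linarith, by simp; linarith⟩ (by linarith)
  have h₂ : slope (log ∘ Gamma) (c + 1) a ≤ slope (log ∘ Gamma) (c + 1) c :=
    hconv.slope_mono (by simp; linarith) ⟨ha, by simp; linarith⟩ ⟨hc, by simp⟩ (by linarith)
  have h₃ : slope (log ∘ Gamma) c (c + 1) = log c := by
    simp [slope_def_field, Gamma_add_one hc.ne', log_mul hc.ne' (Gamma_pos_of_pos hc).ne']
  have hslope : log (Gamma (a + h)) - log (Gamma a) ≤ h * log c := by
    have := h₁.trans ((slope_comm _ _ _).trans_le (h₂.trans_eq ((slope_comm _ _ _).trans h₃)))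
    rw [slope_def_field, add_sub_cancel_left, div_le_iff₀ (by linarith)] at this
    simpa [mul_comm] using this
  calc Gamma (a + h) = exp (log (Gamma (a + h))) := (exp_log (Gamma_pos_of_pos (by linarith))).symm
    _ ≤ exp (log (Gamma a) + h * log c) := exp_le_exp.mpr (by linarith)
    _ = Gamma a * c ^ h := by rw [exp_add, exp_log hΓa, rpow_def_of_pos hc, mul_comm h]

lemma rpow_mul_Gamma_add_half_le {ν : ℝ} (hν : 0 < ν) (m : ℕ) :
    (2 * m) ^ ((m : ℝ) / 2) * Gamma (ν + m / 2)
      ≤ ((m : ℝ) ^ 2 + (2 * ν - 1) * m) ^ ((m : ℝ) / 2) * Gamma ν := by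
  rcases m.eq_zero_or_pos with rfl | hm
  · simp
  have hm' : (1 : ℝ) ≤ m := by exact_mod_cast hm
  calc (2 * m) ^ ((m : ℝ) / 2) * Gamma (ν + m / 2)
      ≤ (2 * m) ^ ((m : ℝ) / 2) * (Gamma ν * (ν + m / 2 - 1 / 2) ^ ((m : ℝ) / 2)) := by
        gcongr; exact Gamma_add_le_mul_rpow hν (by linarith)
    _ = ((m : ℝ) ^ 2 + (2 * ν - 1) * m) ^ ((m : ℝ) / 2) * Gamma ν := by
        rw [mul_left_comm, ← mul_rpow (by positivity) (by linarith), mul_comm]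
        congr 2; ring

/-- For an integer `m ≥ 0`, `ν > 1/2`, and `x > 0`,
`x^{ν+m} K_ν(x) ≤ (m² + (2ν−1)m)^{m/2} · 2^{ν−1}Γ(ν)` (for `m = 0` the first factor,
a real power `0 ^ 0`, equals `1`). -/
theorem besselK_weighted_bound (m : ℕ) (ν : ℝ) (hν : 1 / 2 < ν) (x : ℝ) (hx : 0 < x) :
    x ^ (ν + (m : ℝ)) * besselK ν x ≤
      ((m : ℝ) ^ 2 + (2 * ν - 1) * (m : ℝ)) ^ ((m : ℝ) / 2) *
        (2 ^ (ν - 1) * Real.Gamma ν) := by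
  have hν0 : 0 < ν := by linarith
  rw [besselK_eq_integral hν0 hx]
  set J := ∫ u in Ioi 0, u ^ (ν - 1) * exp (-u - x ^ 2 / (4 * u))
  calc x ^ (ν + (m : ℝ)) * (2 ^ (ν - 1) * x ^ (-ν) * J) = 2 ^ (ν - 1) * (x ^ (m : ℝ) * J) := by
        rw [rpow_add hx, rpow_neg hx.le]
        field_simp
    _ ≤ 2 ^ (ν - 1) * ((2 * m) ^ ((m : ℝ) / 2) * Gamma (ν + m / 2)) := by
        gcongr ?_ * ?_
        exact rpow_mul_integral_Ioi_rpow_mul_exp_le hν0 m.cast_nonneg hx.le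
    _ ≤ 2 ^ (ν - 1) * (((m : ℝ) ^ 2 + (2 * ν - 1) * m) ^ ((m : ℝ) / 2) * Gamma ν) := by
        gcongr ?_ * ?_
        exact rpow_mul_Gamma_add_half_le hν0 m
    _ = _ := by ring
end

section
/- Let 0 < α < 2 and let n ≥ 1 be an integer. For every (η₁,…,η_{2n+1}) ∈ ℝ^{2n+1}, the integral T_n(η₁,…,η_{2n+1}) = ∫_ℝ [∏_{j=1}^{2n+1}(1 − e^{iη_jζ})] · |ζ|^{α−1} sgn(ζ) · ζ^{−(2n+1)} dζ is absolutely convergent and satisfies |T_n(η₁,…,η_{2n+1})| ≤ (2^{1+α}/α)·∏_{j=1}^{2n+1}|η_j| + 2^{1+α}/(3−α). -/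
/-!
Each factor satisfies `|1 - e^{iθ}| ≤ min (|θ|, 2)`. For `|ζ| ≤ 2` the first bound cancels the
`ζ^{-k}` and leaves `(∏ |η_j|) |ζ|^{α-1}`, integrable near `0` as `α > 0`; for `|ζ| > 2` the
second leaves `2^k |ζ|^{α-1-k}`, integrable at infinity as `α < k`. Integrating this even
majorant gives `2^{1+α}/α · ∏ |η_j| + 2^{1+α}/(k-α)`, and `k = 2n+1 ≥ 3`.
-/

open MeasureTheory Set Complex

lemma Real.measurable_sign : Measurable Real.sign :=
  Measurable.ite measurableSet_Iio measurable_const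
    (Measurable.ite measurableSet_Ioi measurable_const measurable_const)

lemma integrable_comp_abs_of_integrableOn_Ioi {E : Type*} [NormedAddCommGroup E] {f : ℝ → E}
    (hf : IntegrableOn f (Ioi 0)) : Integrable fun x => f |x| := by
  have hIoi : IntegrableOn (fun x => f |x|) (Ioi 0) :=
    hf.congr_fun (fun x hx => by rw [abs_of_pos hx]) measurableSet_Ioi
  have hIic : IntegrableOn (fun x => f |x|) (Iic 0) := by
    have hneg : MeasurableEmbedding fun x : ℝ => -x := (Homeomorph.neg ℝ).measurableEmbedding
    rw [← Measure.map_neg_eq_self (volume : Measure ℝ), hneg.integrableOn_map_iff]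
    simp_rw [Function.comp_def, abs_neg, neg_preimage, neg_Iic, neg_zero]
    exact (integrableOn_Ici_iff_integrableOn_Ioi).2 hIoi
  simpa using hIic.union hIoi

lemma norm_one_sub_exp_I_mul_le_two (x : ℝ) : ‖1 - exp (I * x)‖ ≤ 2 := by
  calc ‖1 - exp (I * x)‖ ≤ ‖(1 : ℂ)‖ + ‖exp (I * x)‖ := norm_sub_le _ _
    _ = 2 := by rw [norm_one, mul_comm, norm_exp_ofReal_mul_I]; norm_num

lemma norm_one_sub_exp_I_mul_le_abs (x : ℝ) : ‖1 - exp (I * x)‖ ≤ |x| := by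
  simpa [norm_sub_rev] using Real.norm_exp_I_mul_ofReal_sub_one_le (x := x)

section Product

variable {ι : Type*} [Fintype ι] (η : ι → ℝ) (ζ : ℝ)

private lemma I_mul_ofReal_mul_ofReal (a b : ℝ) :
    I * (a : ℂ) * (b : ℂ) = I * ((a * b : ℝ) : ℂ) := by
  push_cast; ring

lemma norm_prod_one_sub_exp_le_prod_abs_mul :
    ‖∏ j, (1 - exp (I * η j * ζ))‖ ≤ (∏ j, |η j|) * |ζ| ^ Fintype.card ι := by
  rw [norm_prod, ← Finset.card_univ, ← Finset.prod_const, ← Finset.prod_mul_distrib]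
  gcongr with j
  simpa [I_mul_ofReal_mul_ofReal, abs_mul] using norm_one_sub_exp_I_mul_le_abs (η j * ζ)

lemma norm_prod_one_sub_exp_le_two_pow :
    ‖∏ j, (1 - exp (I * η j * ζ))‖ ≤ 2 ^ Fintype.card ι := by
  rw [norm_prod, ← Finset.card_univ, ← Finset.prod_const]
  gcongr with j
  simpa [I_mul_ofReal_mul_ofReal] using norm_one_sub_exp_I_mul_le_two (η j * ζ)

end Product

noncomputable def symbolIntegrand (α : ℝ) {k : ℕ} (η : Fin k → ℝ) (ζ : ℝ) : ℂ :=
  (∏ j, (1 - exp (I * η j * ζ))) * ((|ζ| ^ (α - 1) * Real.sign ζ / ζ ^ k : ℝ) : ℂ)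

noncomputable def symbolMajorant (A α : ℝ) (k : ℕ) (t : ℝ) : ℝ :=
  if t ≤ 2 then A * t ^ (α - 1) else 2 ^ k * t ^ (α - 1 - k)

section Symbol

variable {α : ℝ} {k : ℕ}

lemma symbolMajorant_of_le (A : ℝ) {t : ℝ} (ht : t ≤ 2) :
    symbolMajorant A α k t = A * t ^ (α - 1) :=
  if_pos ht

lemma symbolMajorant_of_lt (A : ℝ) {t : ℝ} (ht : 2 < t) :
    symbolMajorant A α k t = 2 ^ k * t ^ (α - 1 - k) :=
  if_neg ht.not_ge

lemma norm_ofReal_rpow_abs_mul_sign_div_pow {ζ : ℝ} (hζ : ζ ≠ 0) :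
    ‖((|ζ| ^ (α - 1) * Real.sign ζ / ζ ^ k : ℝ) : ℂ)‖ = |ζ| ^ (α - 1 - k) := by
  have hsign : |Real.sign ζ| = 1 := by
    rcases Real.sign_apply_eq_of_ne_zero ζ hζ with h | h <;> simp [h]
  rw [norm_real, Real.norm_eq_abs, abs_div, abs_mul, abs_pow, hsign, mul_one,
    abs_of_nonneg (by positivity), Real.rpow_sub (abs_pos.2 hζ) _ k, Real.rpow_natCast]

lemma norm_symbolIntegrand_le (η : Fin k → ℝ) (ζ : ℝ) :
    ‖symbolIntegrand α η ζ‖ ≤ symbolMajorant (∏ j, |η j|) α k |ζ| := by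
  have hA : 0 ≤ ∏ j, |η j| := Finset.prod_nonneg fun j _ => abs_nonneg _
  rcases eq_or_ne ζ 0 with rfl | hζ
  · simp [symbolIntegrand, symbolMajorant]
    positivity
  have ht : 0 < |ζ| := abs_pos.2 hζ
  rw [symbolIntegrand, norm_mul, norm_ofReal_rpow_abs_mul_sign_div_pow hζ, symbolMajorant]
  split_ifs
  · calc _ ≤ (∏ j, |η j|) * |ζ| ^ k * |ζ| ^ (α - 1 - k) := by
          gcongr
          simpa using norm_prod_one_sub_exp_le_prod_abs_mul η ζ
      _ = (∏ j, |η j|) * |ζ| ^ (α - 1) := by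
          rw [mul_assoc, ← Real.rpow_natCast, ← Real.rpow_add ht]
          ring_nf
  · gcongr
    simpa using norm_prod_one_sub_exp_le_two_pow η ζ

variable (hα : 0 < α) (hk : α < k)
include hα hk

lemma integrableOn_symbolMajorant (A : ℝ) : IntegrableOn (symbolMajorant A α k) (Ioi 0) := by
  have hnear : IntegrableOn (symbolMajorant A α k) (Ioc 0 2) := by
    refine IntegrableOn.congr_fun ?_ (fun t ht => (symbolMajorant_of_le A ht.2).symm)
      measurableSet_Ioc
    exact ((intervalIntegral.intervalIntegrable_rpow' (by linarith)).1).const_mul A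
  have hfar : IntegrableOn (symbolMajorant A α k) (Ioi 2) := by
    refine IntegrableOn.congr_fun ?_ (fun t ht => (symbolMajorant_of_lt A ht).symm)
      measurableSet_Ioi
    exact (integrableOn_Ioi_rpow_of_lt (by linarith) two_pos).const_mul _
  simpa using hnear.union hfar

lemma integral_symbolMajorant (A : ℝ) :
    ∫ t in Ioi 0, symbolMajorant A α k t = A * (2 ^ α / α) + 2 ^ α / (k - α) := by
  have hint := integrableOn_symbolMajorant hα hk A
  have hnear : ∫ t in Ioc 0 2, symbolMajorant A α k t = A * (2 ^ α / α) := by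
    rw [setIntegral_congr_fun measurableSet_Ioc fun t ht => symbolMajorant_of_le A ht.2,
      integral_const_mul, ← intervalIntegral.integral_of_le zero_le_two,
      integral_rpow (.inl (by linarith)), sub_add_cancel, Real.zero_rpow hα.ne', sub_zero]
  have hfar : ∫ t in Ioi 2, symbolMajorant A α k t = 2 ^ α / (k - α) := by
    rw [setIntegral_congr_fun measurableSet_Ioi fun t ht => symbolMajorant_of_lt A ht,
      integral_const_mul, integral_Ioi_rpow_of_lt (by linarith) two_pos,
      show α - 1 - k + 1 = α - k by ring, Real.rpow_sub two_pos, Real.rpow_natCast,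
      ← neg_sub (k : ℝ), div_neg]
    field_simp
  rw [← Ioc_union_Ioi_eq_Ioi zero_le_two, setIntegral_union (Ioc_disjoint_Ioi le_rfl)
    measurableSet_Ioi (hint.mono_set Ioc_subset_Ioi_self)
    (hint.mono_set (Ioi_subset_Ioi zero_le_two)), hnear, hfar]

theorem integrable_symbolIntegrand (η : Fin k → ℝ) : Integrable (symbolIntegrand α η) := by
  refine (integrable_comp_abs_of_integrableOn_Ioi (integrableOn_symbolMajorant hα hk _)).mono'
    ?_ (ae_of_all _ (norm_symbolIntegrand_le η))
  have hkernel : Measurable fun ζ : ℝ => |ζ| ^ (α - 1) * Real.sign ζ / ζ ^ k :=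
    ((by fun_prop : Measurable fun ζ : ℝ => |ζ| ^ (α - 1)).mul Real.measurable_sign).div
      (by fun_prop)
  have hprod : Continuous fun ζ : ℝ => ∏ j, (1 - exp (I * η j * ζ)) := by fun_prop
  exact hprod.aestronglyMeasurable.mul (measurable_ofReal.comp hkernel).aestronglyMeasurable

theorem norm_integral_symbolIntegrand_le (η : Fin k → ℝ) :
    ‖∫ ζ, symbolIntegrand α η ζ‖ ≤
      2 ^ (1 + α) / α * ∏ j, |η j| + 2 ^ (1 + α) / (k - α) := by
  calc ‖∫ ζ, symbolIntegrand α η ζ‖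
      ≤ ∫ ζ, symbolMajorant (∏ j, |η j|) α k |ζ| :=
        norm_integral_le_of_norm_le
          (integrable_comp_abs_of_integrableOn_Ioi (integrableOn_symbolMajorant hα hk _))
          (ae_of_all _ (norm_symbolIntegrand_le η))
    _ = 2 ^ (1 + α) / α * ∏ j, |η j| + 2 ^ (1 + α) / (k - α) := by
        rw [integral_comp_abs, integral_symbolMajorant hα hk, Real.rpow_add two_pos,
          Real.rpow_one]
        ring

end Symbol

/-- For `0 < α < 2` and `n ≥ 1`, the multilinear symbol
`T_n(η₁,…,η_{2n+1}) = ∫_ℝ [∏_j (1 − e^{iη_jζ})]·|ζ|^{α−1} sgn(ζ)·ζ^{−(2n+1)} dζ`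
is absolutely convergent and satisfies
`|T_n| ≤ (2^{1+α}/α)·∏_j |η_j| + 2^{1+α}/(3−α)`. -/
theorem Tn_integrable_and_bound (α : ℝ) (h0 : 0 < α) (h2 : α < 2) (n : ℕ) (hn : 1 ≤ n)
    (η : Fin (2 * n + 1) → ℝ) :
    Integrable (fun ζ : ℝ =>
      (∏ j, (1 - Complex.exp (Complex.I * (η j : ℂ) * (ζ : ℂ)))) *
        ((|ζ| ^ (α - 1) * Real.sign ζ / ζ ^ (2 * n + 1) : ℝ) : ℂ)) ∧
    ‖∫ ζ : ℝ, (∏ j, (1 - Complex.exp (Complex.I * (η j : ℂ) * (ζ : ℂ)))) *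
        ((|ζ| ^ (α - 1) * Real.sign ζ / ζ ^ (2 * n + 1) : ℝ) : ℂ)‖ ≤
      ((2 : ℝ) ^ (1 + α) / α) * ∏ j, |η j| + (2 : ℝ) ^ (1 + α) / (3 - α) := by
  have h3 : (3 : ℝ) ≤ (2 * n + 1 : ℕ) := by exact_mod_cast (by omega : 3 ≤ 2 * n + 1)
  have hk : α < (2 * n + 1 : ℕ) := by linarith
  refine ⟨integrable_symbolIntegrand h0 hk η,
    (norm_integral_symbolIntegrand_le h0 hk η).trans ?_⟩
  gcongr
  linarith
end

section
/- Let ξ, v, b₁, b₂, Θ₊, Θ₋ be real numbers with Θ₊Θ₋ > 0, and let M be the associated 2×2 complex matrix. Then every eigenvalue μ ∈ ℂ of M satisfies Re μ = 0 (linearized stability of the flat two-front GSQG shear flow). -/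
open Matrix

/-- The Fourier-side coefficient matrix of the two-front GSQG system linearized about
flat fronts. -/
noncomputable def frontMatrix (ξ v b₁ b₂ Θp Θm : ℝ) : Matrix (Fin 2) (Fin 2) ℂ :=
  !![-Complex.I * (ξ : ℂ) * ((v : ℂ) + (Θp : ℂ) * (b₁ : ℂ)),
      -Complex.I * (ξ : ℂ) * ((Θm : ℂ) * (b₂ : ℂ));
     -Complex.I * (ξ : ℂ) * ((Θp : ℂ) * (b₂ : ℂ)),
      -Complex.I * (ξ : ℂ) * (-(v : ℂ) + (Θm : ℂ) * (b₁ : ℂ))]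

/-- If `Θ₊Θ₋ > 0`, every eigenvalue `μ` of the linearized two-front
matrix is purely imaginary: `Re μ = 0` (linearized stability of the flat two-front GSQG
shear flow). -/
theorem frontMatrix_stable (ξ v b₁ b₂ Θp Θm : ℝ) (hΘ : 0 < Θp * Θm) (μ : ℂ)
    (w : Fin 2 → ℂ) (hw : w ≠ 0)
    (hμ : (frontMatrix ξ v b₁ b₂ Θp Θm).mulVec w = μ • w) :
    μ.re = 0 := by
  have e0 := congrFun hμ 0
  have e1 := congrFun hμ 1
  simp [frontMatrix, Matrix.mulVec, dotProduct, Fin.sum_univ_two] at e0 e1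
  by_cases h0 : w 0 = 0
  · have h1 : w 1 ≠ 0 := by
      intro h1; exact hw (funext fun i => by fin_cases i <;> simp [h0, h1])
    rw [h0] at e1
    have hμeq : -(Complex.I * (ξ:ℂ) * (-(v:ℂ) + (Θm:ℂ) * (b₁:ℂ))) = μ :=
      mul_right_cancel₀ h1 (by linear_combination e1)
    rw [← hμeq]; simp
  by_cases h1 : w 1 = 0
  · rw [h1] at e0
    have hμeq : -(Complex.I * (ξ:ℂ) * ((v:ℂ) + (Θp:ℂ) * (b₁:ℂ))) = μ :=
      mul_right_cancel₀ h0 (by linear_combination e0)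
    rw [← hμeq]; simp
  · have key : (μ + Complex.I * (ξ:ℂ) * ((v:ℂ) + (Θp:ℂ) * (b₁:ℂ))) *
        (μ + Complex.I * (ξ:ℂ) * (-(v:ℂ) + (Θm:ℂ) * (b₁:ℂ))) * (w 0 * w 1) =
        (Complex.I * (ξ:ℂ) * ((Θm:ℂ) * (b₂:ℂ))) *
        (Complex.I * (ξ:ℂ) * ((Θp:ℂ) * (b₂:ℂ))) * (w 0 * w 1) := by
      linear_combination (-(μ + Complex.I * (ξ:ℂ) * (-(v:ℂ) + (Θm:ℂ) * (b₁:ℂ))) * w 1) * e0 +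
        (Complex.I * (ξ:ℂ) * ((Θm:ℂ) * (b₂:ℂ)) * w 1) * e1
    have key2 := mul_right_cancel₀ (mul_ne_zero h0 h1) key
    have hre := congrArg Complex.re key2
    have him := congrArg Complex.im key2
    simp [Complex.add_re, Complex.add_im, Complex.mul_re, Complex.mul_im] at hre him
    by_contra hx
    have hs : 2 * μ.im + ξ * (v + Θp * b₁) + ξ * (-v + Θm * b₁) = 0 := by
      have hx2 : μ.re ≠ 0 := hx
      have : μ.re * (2 * μ.im + ξ * (v + Θp * b₁) + ξ * (-v + Θm * b₁)) = 0 := by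
        nlinarith [him]
      rcases mul_eq_zero.mp this with h | h
      · exact absurd h hx2
      · exact h
    have hxx : 0 < μ.re ^ 2 := by positivity
    nlinarith [hre, hs, mul_nonneg hΘ.le (sq_nonneg (ξ * b₂)),
      sq_nonneg (ξ * (v + Θp * b₁) - ξ * (-v + Θm * b₁))]
end

section
/- Let ξ, v, b₁, b₂, Θ₊, Θ₋ be real numbers, let M be the associated 2×2 complex matrix, and let Δ = −(ξb₁(Θ₊−Θ₋) + 2vξ)² − 4Θ₊Θ₋ξ²b₂². If Δ > 0, then M has an eigenvalue μ ∈ ℂ with Re μ = √Δ/2 > 0 (existence of a linearly unstable mode with exponential growth rate √Δ/2). -/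
open Matrix

/-- If the discriminant `Δ = −(ξb₁(Θ₊−Θ₋)+2vξ)² − 4Θ₊Θ₋ξ²b₂²` is
positive, then the linearized two-front matrix has an eigenvalue with real part
`√Δ/2 > 0` (a linearly unstable mode with exponential growth rate `√Δ/2`). -/
theorem frontMatrix_unstable (ξ v b₁ b₂ Θp Θm : ℝ)
    (hΔ : 0 < -(ξ * b₁ * (Θp - Θm) + 2 * v * ξ) ^ 2 - 4 * Θp * Θm * ξ ^ 2 * b₂ ^ 2) :
    ∃ μ : ℂ,
      (∃ w : Fin 2 → ℂ, w ≠ 0 ∧ (frontMatrix ξ v b₁ b₂ Θp Θm).mulVec w = μ • w) ∧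
      μ.re = Real.sqrt
          (-(ξ * b₁ * (Θp - Θm) + 2 * v * ξ) ^ 2 - 4 * Θp * Θm * ξ ^ 2 * b₂ ^ 2) / 2 ∧
      0 < μ.re := by
  set Δ : ℝ := -(ξ * b₁ * (Θp - Θm) + 2 * v * ξ) ^ 2 - 4 * Θp * Θm * ξ ^ 2 * b₂ ^ 2 with hΔdef
  set s : ℝ := Real.sqrt Δ with hsdef
  have hs2 : s ^ 2 = Δ := Real.sq_sqrt hΔ.le
  have hspos : 0 < s := Real.sqrt_pos.2 hΔ
  have hb : ξ * (Θm * b₂) ≠ 0 := by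
    intro h
    have h0 : 4 * Θp * Θm * ξ ^ 2 * b₂ ^ 2 = 4 * Θp * (ξ * (Θm * b₂)) * (ξ * b₂) := by ring
    rw [h] at h0
    nlinarith [sq_nonneg (ξ * b₁ * (Θp - Θm) + 2 * v * ξ)]
  set μ : ℂ := ((s / 2 : ℝ) : ℂ) + ((-(ξ * b₁ * (Θp + Θm)) / 2 : ℝ) : ℂ) * Complex.I with hμdef
  refine ⟨μ, ⟨![-Complex.I * (ξ : ℂ) * ((Θm : ℂ) * (b₂ : ℂ)),
      μ - (-Complex.I * (ξ : ℂ) * ((v : ℂ) + (Θp : ℂ) * (b₁ : ℂ)))], ?_, ?_⟩, ?_, ?_⟩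
  · intro h
    have h0 := congrFun h 0
    simp only [Matrix.cons_val_zero, Pi.zero_apply] at h0
    apply hb
    have : (-Complex.I * (ξ : ℂ) * ((Θm : ℂ) * (b₂ : ℂ))) = -Complex.I * ((ξ * (Θm * b₂) : ℝ) : ℂ) := by
      push_cast; ring
    rw [this] at h0
    have := mul_eq_zero.mp h0
    rcases this with h1 | h1
    · exact absurd h1 (by simp [Complex.I_ne_zero])
    · exact_mod_cast h1
  · funext i
    have hs2' : s ^ 2 = -(ξ * b₁ * (Θp - Θm) + 2 * v * ξ) ^ 2 - 4 * Θp * Θm * ξ ^ 2 * b₂ ^ 2 :=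
      hs2.trans hΔdef
    fin_cases i
    · simp [frontMatrix, Matrix.mulVec, dotProduct, Fin.sum_univ_two, hμdef, Complex.ext_iff]
      constructor <;> ring
    · simp [frontMatrix, Matrix.mulVec, dotProduct, Fin.sum_univ_two, hμdef, Complex.ext_iff]
      refine ⟨by linear_combination (-(1:ℝ)/4) * hs2', by ring⟩
  · simp [hμdef]
  · simp [hμdef]; positivity
end

section
/- Let Θ ≠ 0 and h > 0 be real, and let ξ ∈ ℝ satisfy 0 < h|ξ| ≤ 3/5. With the choices Θ₊ = Θ, Θ₋ = −Θ, v = −Θh, b₁ = 1/(2|ξ|), b₂ = e^{−2h|ξ|}/(2|ξ|) (the anti-symmetric two-front Euler shear flow), the discriminant satisfies Δ = Θ²(e^{−4h|ξ|} − (1 − 2h|ξ|)²) > 0; in particular, the matrix M has an eigenvalue with strictly positive real part, so the anti-symmetric Euler shear flow is linearly unstable at these wavenumbers. -/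
open Matrix

lemma eig_helper (A C μ : ℂ) (h : A^2 - C^2 = μ^2) :
    (!![A, -C; C, -A]).mulVec ![C, A - μ] = μ • ![C, A - μ] := by
  funext i
  fin_cases i <;>
    simp [Matrix.mulVec, dotProduct, Fin.sum_univ_two]
  · ring
  · linear_combination -h

/-- For the anti-symmetric two-front Euler shear flow
(`Θ₊ = Θ`, `Θ₋ = −Θ`, `v = −Θh`, `b₁ = 1/(2|ξ|)`, `b₂ = e^{−2h|ξ|}/(2|ξ|)`) with
`0 < h|ξ| ≤ 3/5`, the discriminant satisfies
`Δ = Θ²(e^{−4h|ξ|} − (1 − 2h|ξ|)²) > 0`; in particular the linearized matrix has an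
eigenvalue with strictly positive real part, so the flow is linearly unstable. -/
theorem euler_antisymmetric_shear_unstable (Θ h ξ : ℝ) (hΘ : Θ ≠ 0) (hh : 0 < h)
    (h1 : 0 < h * |ξ|) (h2 : h * |ξ| ≤ 3 / 5) :
    -(ξ * (1 / (2 * |ξ|)) * (Θ - -Θ) + 2 * (-Θ * h) * ξ) ^ 2
        - 4 * Θ * (-Θ) * ξ ^ 2 * (Real.exp (-2 * h * |ξ|) / (2 * |ξ|)) ^ 2 =
      Θ ^ 2 * (Real.exp (-4 * h * |ξ|) - (1 - 2 * h * |ξ|) ^ 2) ∧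
    0 < Θ ^ 2 * (Real.exp (-4 * h * |ξ|) - (1 - 2 * h * |ξ|) ^ 2) ∧
    ∃ μ : ℂ,
      (∃ w : Fin 2 → ℂ, w ≠ 0 ∧
        (frontMatrix ξ (-Θ * h) (1 / (2 * |ξ|)) (Real.exp (-2 * h * |ξ|) / (2 * |ξ|))
            Θ (-Θ)).mulVec w = μ • w) ∧
      0 < μ.re := by
  have hr : 0 < |ξ| := by nlinarith [abs_nonneg ξ]
  have hξ : ξ ≠ 0 := abs_pos.mp hr
  have hrne : |ξ| ≠ 0 := ne_of_gt hr
  have hexp5 : Real.exp (6/5) < 5 := by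
    by_contra hc
    push_neg at hc
    have h5 : (5:ℝ)^5 ≤ Real.exp (6/5)^5 := pow_le_pow_left₀ (by norm_num) hc 5
    have he6 : Real.exp (6/5)^5 = Real.exp 6 := by
      rw [← Real.exp_nat_mul]; norm_num
    have h16 : Real.exp 6 = Real.exp 1 ^ 6 := by
      rw [← Real.exp_nat_mul]; norm_num
    have h1e : Real.exp 1 < 2.7182818286 := Real.exp_one_lt_d9
    have h0e : (0:ℝ) < Real.exp 1 := Real.exp_pos 1
    have p2 : Real.exp 1 ^ 2 < 7.39 := by nlinarith
    have p3 : Real.exp 1 ^ 3 < 20.1 := by nlinarith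
    have h6 : Real.exp 6 < 3125 := by rw [h16]; nlinarith [pow_pos h0e 3]
    nlinarith [h5, he6, h6]
  have hexpneg : (1:ℝ)/5 < Real.exp (-(6/5)) := by
    rw [Real.exp_neg]
    rw [lt_inv_comm₀ (by norm_num) (Real.exp_pos _)]
    simpa using hexp5
  have f1 : 1 - 2*(h*|ξ|) < Real.exp (-(2*(h*|ξ|))) := by
    have := Real.add_one_lt_exp (x := -(2*(h*|ξ|))) (by nlinarith)
    linarith
  have f2 : 0 < Real.exp (-(2*(h*|ξ|))) + (1 - 2*(h*|ξ|)) := by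
    have hm : Real.exp (-(6/5)) ≤ Real.exp (-(2*(h*|ξ|))) :=
      Real.exp_le_exp.mpr (by linarith)
    linarith
  have hee : Real.exp (-2*h*|ξ|) = Real.exp (-(2*(h*|ξ|))) := by ring_nf
  have he4 : Real.exp (-4*h*|ξ|) = Real.exp (-2*h*|ξ|)^2 := by
    rw [sq, ← Real.exp_add]; ring_nf
  have hE : 0 < Real.exp (-4*h*|ξ|) - (1 - 2*h*|ξ|)^2 := by
    rw [he4, hee]
    nlinarith [mul_pos (sub_pos.2 f1) f2]
  have hξ2 : ξ^2 = |ξ|^2 := (sq_abs ξ).symm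
  have hinv : |ξ| * |ξ|⁻¹ = 1 := mul_inv_cancel₀ hrne
  refine ⟨?_, ?_, ?_⟩
  · rw [he4]
    linear_combination (Θ^2*(Real.exp (-2*h*|ξ|))^2*|ξ|⁻¹^2 - Θ^2*(|ξ|⁻¹ - 2*h)^2) * hξ2
      + (Θ^2*(Real.exp (-2*h*|ξ|))^2*((|ξ| * |ξ|⁻¹)+1) - Θ^2*(1+(|ξ| * |ξ|⁻¹)-4*h*|ξ|)) * hinv
  · exact mul_pos (by positivity) hE
  · have hdd : 0 < (Θ * (Real.exp (-2*h*|ξ|)/(2*|ξ|)))^2 - (-(Θ*h) + Θ*(1/(2*|ξ|)))^2 := by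
      have hddE : (Θ * (Real.exp (-2*h*|ξ|)/(2*|ξ|)))^2 - (-(Θ*h) + Θ*(1/(2*|ξ|)))^2
          = Θ^2 * |ξ|⁻¹^2 / 4 * (Real.exp (-4*h*|ξ|) - (1 - 2*h*|ξ|)^2) := by
        rw [he4]
        linear_combination (-(Θ^2*h)*(|ξ|⁻¹ - h*(|ξ| * |ξ|⁻¹) - h)) * hinv
      rw [hddE]
      have hΘ2 : 0 < Θ^2 := lt_of_le_of_ne (sq_nonneg Θ) (Ne.symm (pow_ne_zero 2 hΘ))
      have hy2 : 0 < |ξ|⁻¹^2 := pow_pos (inv_pos.mpr hr) 2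
      exact mul_pos (div_pos (mul_pos hΘ2 hy2) (by norm_num)) hE
    have hμpos : 0 < |ξ| * Real.sqrt ((Θ * (Real.exp (-2*h*|ξ|)/(2*|ξ|)))^2 - (-(Θ*h) + Θ*(1/(2*|ξ|)))^2) :=
      mul_pos hr (Real.sqrt_pos.mpr hdd)
    have hμ2 : (|ξ| * Real.sqrt ((Θ * (Real.exp (-2*h*|ξ|)/(2*|ξ|)))^2 - (-(Θ*h) + Θ*(1/(2*|ξ|)))^2))^2
        = ξ^2 * ((Θ * (Real.exp (-2*h*|ξ|)/(2*|ξ|)))^2 - (-(Θ*h) + Θ*(1/(2*|ξ|)))^2) := by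
      rw [mul_pow, Real.sq_sqrt hdd.le, ← hξ2]
    set μre : ℝ := |ξ| * Real.sqrt ((Θ * (Real.exp (-2*h*|ξ|)/(2*|ξ|)))^2 - (-(Θ*h) + Θ*(1/(2*|ξ|)))^2) with hμdef
    refine ⟨(μre : ℂ),
      ⟨![-Complex.I * (ξ:ℂ) * ((Θ:ℂ) * (((Real.exp (-2*h*|ξ|) : ℝ):ℂ)/(2*((|ξ| : ℝ):ℂ)))),
         -Complex.I * (ξ:ℂ) * (-((Θ:ℂ)*(h:ℂ)) + (Θ:ℂ)*(1/(2*((|ξ| : ℝ):ℂ)))) - (μre:ℂ)],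
        ?_, ?_⟩, ?_⟩
    · intro hw0
      have hC : (-Complex.I * (ξ:ℂ) * ((Θ:ℂ) * (((Real.exp (-2*h*|ξ|) : ℝ):ℂ)/(2*((|ξ| : ℝ):ℂ))))) ≠ 0 := by
        have he2pos : (0:ℝ) < Real.exp (-2*h*|ξ|) := Real.exp_pos _
        apply mul_ne_zero (mul_ne_zero ?_ ?_) ?_
        · simpa using Complex.I_ne_zero
        · exact_mod_cast hξ
        · apply mul_ne_zero
          · exact_mod_cast hΘ
          · apply div_ne_zero
            · exact_mod_cast ne_of_gt he2pos
            · have : (2:ℝ) * |ξ| ≠ 0 := mul_ne_zero two_ne_zero hrne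
              exact_mod_cast this
      have := congrFun hw0 0
      simp only [Matrix.cons_val_zero, Pi.zero_apply] at this
      exact hC this
    · have hμ2c : ((μre:ℝ):ℂ)^2 = ((ξ:ℝ):ℂ)^2 *
          (((Θ:ℂ) * (((Real.exp (-2*h*|ξ|) : ℝ):ℂ)/(2*((|ξ| : ℝ):ℂ))))^2
            - (-((Θ:ℂ)*(h:ℂ)) + (Θ:ℂ)*(1/(2*((|ξ| : ℝ):ℂ))))^2) := by
        exact_mod_cast hμ2
      have hmat : frontMatrix ξ (-Θ * h) (1 / (2 * |ξ|)) (Real.exp (-2 * h * |ξ|) / (2 * |ξ|)) Θ (-Θ)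
          = !![-Complex.I * (ξ:ℂ) * (-((Θ:ℂ)*(h:ℂ)) + (Θ:ℂ)*(1/(2*((|ξ| : ℝ):ℂ)))),
               -(-Complex.I * (ξ:ℂ) * ((Θ:ℂ) * (((Real.exp (-2*h*|ξ|) : ℝ):ℂ)/(2*((|ξ| : ℝ):ℂ)))));
               -Complex.I * (ξ:ℂ) * ((Θ:ℂ) * (((Real.exp (-2*h*|ξ|) : ℝ):ℂ)/(2*((|ξ| : ℝ):ℂ)))),
               -(-Complex.I * (ξ:ℂ) * (-((Θ:ℂ)*(h:ℂ)) + (Θ:ℂ)*(1/(2*((|ξ| : ℝ):ℂ)))))] := by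
        ext i j
        fin_cases i <;> fin_cases j <;>
          simp [frontMatrix] <;> push_cast <;> ring
      rw [hmat]
      apply eig_helper
      linear_combination -hμ2c + ((ξ:ℝ):ℂ)^2 *
        ((-((Θ:ℂ)*(h:ℂ)) + (Θ:ℂ)*(1/(2*((|ξ| : ℝ):ℂ))))^2
          - ((Θ:ℂ) * (((Real.exp (-2*h*|ξ|) : ℝ):ℂ)/(2*((|ξ| : ℝ):ℂ))))^2) * Complex.I_sq
    · simpa using hμpos
end

section
/- For every c > 0 and every ξ ∈ ℝ, ∫_ℝ cos(ξx)/(x² + c) dx = (π/√c)·e^{−√c·|ξ|}. -/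
/-!
The Fourier transform of `e^{-a|x|}` (`a > 0`) is `2a / (a² + (2πw)²)`: split the integral at `0`
into two exponential integrals. Both functions are integrable and `e^{-a|x|}` is continuous, so
Fourier inversion at `ξ` holds; its real part, after the substitution `y = 2πx`, is
`∫ cos(ξy) / (y² + a²) dy = (π/a) e^{-a|ξ|}`. Take `a = √c`.
-/

open MeasureTheory Set Real FourierTransform

lemma integrable_inv_sq_add {c : ℝ} (hc : 0 < c) : Integrable fun x : ℝ => (x ^ 2 + c)⁻¹ := by
  have hs : √c ≠ 0 := (sqrt_pos.mpr hc).ne'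
  refine ((integrable_inv_one_add_sq.comp_div hs).const_mul c⁻¹).congr (ae_of_all _ fun x => ?_)
  show c⁻¹ * (1 + (x / √c) ^ 2)⁻¹ = (x ^ 2 + c)⁻¹
  rw [div_pow, sq_sqrt hc.le, ← mul_inv]
  congr 1
  field_simp
  ring

lemma integrable_cos_mul_div_sq_add {c : ℝ} (hc : 0 < c) (ξ : ℝ) :
    Integrable fun x : ℝ => cos (ξ * x) / (x ^ 2 + c) := by
  have hcont : Continuous fun x : ℝ => cos (ξ * x) / (x ^ 2 + c) :=
    (continuous_cos.comp (continuous_const_mul ξ)).div (by fun_prop) fun x => by positivity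
  refine (integrable_inv_sq_add hc).mono' hcont.aestronglyMeasurable (ae_of_all _ fun x => ?_)
  rw [norm_div, norm_of_nonneg (by positivity : 0 ≤ x ^ 2 + c), div_eq_mul_inv]
  exact mul_le_of_le_one_left (by positivity) (abs_cos_le_one _)

lemma integrable_exp_neg_mul_abs {a : ℝ} (ha : 0 < a) :
    Integrable fun x : ℝ => rexp (-a * |x|) := by
  rw [← integrableOn_univ, ← Iic_union_Ioi (a := 0), integrableOn_union]
  constructor
  · refine (integrableOn_exp_mul_Iic ha 0).congr_fun (fun x hx => ?_) measurableSet_Iic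
    simp [abs_of_nonpos (mem_Iic.mp hx)]
  · refine (integrableOn_exp_mul_Ioi (neg_lt_zero.mpr ha) 0).congr_fun (fun x hx => ?_)
      measurableSet_Ioi
    simp [abs_of_pos (mem_Ioi.mp hx)]

lemma fourier_exp_neg_mul_abs {a : ℝ} (ha : 0 < a) (w : ℝ) :
    𝓕 (fun x : ℝ => (rexp (-a * |x|) : ℂ)) w = ((2 * a / (a ^ 2 + (2 * π * w) ^ 2) : ℝ) : ℂ) := by
  rw [Real.fourier_real_eq_integral_exp_smul]
  set F := fun x : ℝ => Complex.exp (↑(-2 * π * x * w) * Complex.I) • (rexp (-a * |x|) : ℂ)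
  set b : ℂ := 2 * π * w * Complex.I
  have hleft : EqOn F (fun x : ℝ => Complex.exp ((a - b) * x)) (Iic 0) := by
    intro x hx
    simp only [F, smul_eq_mul, abs_of_nonpos (mem_Iic.mp hx), Complex.ofReal_exp, ← Complex.exp_add,
      b]
    push_cast; ring_nf
  have hright : EqOn F (fun x : ℝ => Complex.exp ((-a - b) * x)) (Ioi 0) := by
    intro x hx
    simp only [F, smul_eq_mul, abs_of_pos (mem_Ioi.mp hx), Complex.ofReal_exp, ← Complex.exp_add,
      b]
    push_cast; ring_nf
  have hre_left : 0 < (a - b : ℂ).re := by simpa [b] using ha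
  have hre_right : (-a - b : ℂ).re < 0 := by simpa [b] using ha
  rw [← intervalIntegral.integral_Iic_add_Ioi (b := 0)
      ((integrableOn_exp_mul_complex_Iic hre_left 0).congr_fun hleft.symm measurableSet_Iic)
      ((integrableOn_exp_mul_complex_Ioi hre_right 0).congr_fun hright.symm measurableSet_Ioi),
    setIntegral_congr_fun measurableSet_Iic hleft, setIntegral_congr_fun measurableSet_Ioi hright,
    integral_exp_mul_complex_Iic hre_left, integral_exp_mul_complex_Ioi hre_right]
  have h1 : (a - b : ℂ) ≠ 0 := fun h => by simp [h] at hre_left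
  have h2 : (a + b : ℂ) ≠ 0 := fun h => by simpa [b, ha.ne'] using congrArg Complex.re h
  have hden : ((a ^ 2 + (2 * π * w) ^ 2 : ℝ) : ℂ) = (a - b) * (a + b) := by
    push_cast
    linear_combination (2 * π * w : ℂ) ^ 2 * Complex.I_sq
  rw [Complex.ofReal_div, hden, show (-a - b : ℂ) = -(a + b) by ring]
  simp only [Complex.ofReal_zero, mul_zero, Complex.exp_zero]
  field_simp
  push_cast
  ring

lemma integral_cos_mul_fourier_exp_neg_mul_abs {a : ℝ} (ha : 0 < a) (ξ : ℝ) :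
    ∫ x : ℝ, cos (2 * π * x * ξ) * (2 * a / (a ^ 2 + (2 * π * x) ^ 2)) = rexp (-a * |ξ|) := by
  set f : ℝ → ℂ := fun x => (rexp (-a * |x|) : ℂ)
  set g : ℝ → ℝ := fun x => 2 * a / (a ^ 2 + (2 * π * x) ^ 2)
  have hFf : 𝓕 f = fun x => (g x : ℂ) := funext (fourier_exp_neg_mul_abs ha)
  have hg : Integrable g :=
    (((integrable_inv_sq_add (pow_pos ha 2)).comp_mul_left' (by positivity : 2 * π ≠ 0)).const_mul
      (2 * a)).congr (ae_of_all _ fun x => by simp only [g, div_eq_mul_inv, add_comm])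
  have hf : Integrable f := (integrable_exp_neg_mul_abs ha).ofReal
  have hinv := hf.fourierInv_fourier_eq (hFf ▸ hg.ofReal)
    (by fun_prop : Continuous f).continuousAt (v := ξ)
  rw [Real.fourierInv_eq_fourier_neg, Real.fourier_real_eq_integral_exp_smul, hFf] at hinv
  have hint : Integrable fun x : ℝ => Complex.exp (↑(-2 * π * x * -ξ) * Complex.I) • (g x : ℂ) :=
    hg.norm.mono' (by fun_prop) (ae_of_all _ fun x => by
      rw [norm_smul, Complex.norm_exp_ofReal_mul_I, one_mul, Complex.norm_real])
  have hre := congrArg Complex.re hinv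
  rw [← RCLike.re_to_complex, ← integral_re hint] at hre
  simp only [smul_eq_mul, RCLike.re_to_complex, Complex.re_mul_ofReal, Complex.exp_ofReal_mul_I_re,
    f, Complex.ofReal_re, neg_mul, mul_neg, neg_neg] at hre
  simpa only [neg_mul] using hre

lemma integral_cos_mul_div_sq_add_sq {a : ℝ} (ha : 0 < a) (ξ : ℝ) :
    ∫ x : ℝ, cos (ξ * x) / (x ^ 2 + a ^ 2) = π / a * rexp (-a * |ξ|) := by
  have hscale : rexp (-a * |ξ|) = a / π * ∫ x : ℝ, cos (ξ * x) / (x ^ 2 + a ^ 2) :=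
    calc rexp (-a * |ξ|)
        = ∫ x : ℝ, 2 * a * (cos (ξ * (2 * π * x)) / ((2 * π * x) ^ 2 + a ^ 2)) := by
          rw [← integral_cos_mul_fourier_exp_neg_mul_abs ha ξ]
          congr with x
          ring_nf
      _ = a / π * ∫ x : ℝ, cos (ξ * x) / (x ^ 2 + a ^ 2) := by
          rw [integral_const_mul,
            Measure.integral_comp_mul_left (fun y => cos (ξ * y) / (y ^ 2 + a ^ 2)),
            abs_of_pos (by positivity), smul_eq_mul]
          field_simp
  rw [hscale]
  field_simp

/-- For every `c > 0` and every `ξ ∈ ℝ`, the absolutely convergent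
Lebesgue integral `∫_ℝ cos(ξx)/(x² + c) dx` equals `(π/√c)·e^{−√c·|ξ|}`. -/
theorem integral_cos_div_sq_add_const (c : ℝ) (hc : 0 < c) (ξ : ℝ) :
    Integrable (fun x : ℝ => Real.cos (ξ * x) / (x ^ 2 + c)) ∧
    ∫ x : ℝ, Real.cos (ξ * x) / (x ^ 2 + c) =
      (Real.pi / Real.sqrt c) * Real.exp (-(Real.sqrt c) * |ξ|) := by
  refine ⟨integrable_cos_mul_div_sq_add hc ξ, ?_⟩
  simpa only [sq_sqrt hc.le] using integral_cos_mul_div_sq_add_sq (sqrt_pos.mpr hc) ξ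
end

section
/- Let n ≥ 1 be an integer, 0 < α < 1, and let K ⊂ ℝⁿ be compact. Then there exists a constant C = C(K,α,n) > 0 such that for every φ ∈ C_c^∞(ℝⁿ) with supp φ ⊂ K and every x ∈ ℝⁿ, the integral ∫_{ℝⁿ} (φ(x) − φ(y))/|x−y|^{n+α} dy is absolutely convergent and (1 + |x|^{n+α})·|∫_{ℝⁿ} (φ(x) − φ(y))/|x−y|^{n+α} dy| ≤ C·‖φ‖_{C²}, where ‖φ‖_{C²} = sup_{|β|≤2} sup_{z∈ℝⁿ} |∂^β φ(z)|. (This is the decay estimate showing that the fractional Laplacian (−Δ)^{α/2}f, defined in the distributional sense, is a distribution of order at most 2 for f ∈ L¹_α(ℝⁿ).) -/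
/-!
With `c = n + α`, a function `φ` whose values and first derivatives are bounded by `M` satisfies
`|φ x - φ y| ≤ M min(|x - y|, 2)`, so the integrand is dominated by `M k(y - x)` with
`k z = min(|z|, 2) |z|^{-c}`. The kernel `k` is integrable because `c - 1 < n < c`, which gives
the bound `M ∫ k` for every `x`. When `|x| > 2R` with `K ⊆ B(0, R)`, we have `φ x = 0` and
`|x - y| ≥ |x| / 2` on the support of `φ`, so the integral is `O(M |x|^{-c})`.
-/

open MeasureTheory Metric Set Module

variable {E : Type*} [NormedAddCommGroup E]

lemma norm_iteratedFDeriv_le_iSup [NormedSpace ℝ E] {F : Type*} [NormedAddCommGroup F]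
    [NormedSpace ℝ F] {f : E → F} {k : ℕ} (hf : ContDiff ℝ k f) (hfc : HasCompactSupport f)
    (i : Fin k) (z : E) :
    ‖iteratedFDeriv ℝ i f z‖ ≤ ⨆ j : Fin k, ⨆ z, ‖iteratedFDeriv ℝ j f z‖ := by
  have hbdd : BddAbove (range fun z => ‖iteratedFDeriv ℝ i f z‖) :=
    (hf.continuous_iteratedFDeriv (mod_cast i.is_lt.le)).norm.bddAbove_range_of_hasCompactSupport
      (hfc.iteratedFDeriv _).norm
  exact le_ciSup_of_le (Finite.bddAbove_range _) i (le_ciSup hbdd z)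

lemma abs_sub_le_mul_min_norm_sub [NormedSpace ℝ E] {f : E → ℝ} (hf : Differentiable ℝ f)
    {M : ℝ} (h₀ : ∀ z, |f z| ≤ M) (h₁ : ∀ z, ‖fderiv ℝ f z‖ ≤ M) (x y : E) :
    |f x - f y| ≤ M * min ‖x - y‖ 2 := by
  rw [mul_min_of_nonneg _ _ ((abs_nonneg _).trans (h₀ x))]
  refine le_min ?_ ?_
  · simpa [Real.norm_eq_abs] using convex_univ.norm_image_sub_le_of_norm_fderiv_le
      (fun z _ => hf z) (fun z _ => h₁ z) (mem_univ y) (mem_univ x)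
  · linarith [abs_sub (f x) (f y), h₀ x, h₀ y]

lemma abs_sub_div_norm_rpow_le {f : E → ℝ} {M a c : ℝ} {x y : E}
    (hf : |f x - f y| ≤ M * min ‖x - y‖ a) :
    |(f x - f y) / ‖x - y‖ ^ c| ≤ M * (min ‖y - x‖ a * ‖y - x‖ ^ (-c)) := by
  have hr : 0 ≤ ‖x - y‖ ^ (-c) := Real.rpow_nonneg (norm_nonneg _) _
  rw [div_eq_mul_inv, ← Real.rpow_neg (norm_nonneg _), abs_mul, abs_of_nonneg hr,
    norm_sub_rev y x, ← mul_assoc]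
  exact mul_le_mul_of_nonneg_right hf hr

section Translation

variable [MeasurableSpace E] [BorelSpace E] {μ : Measure E} [μ.IsAddRightInvariant]
  {f : E → ℝ} {M a c : ℝ} {x : E}

lemma integrable_sub_div_norm_rpow (hfc : Continuous f)
    (hk : Integrable (fun z : E => min ‖z‖ a * ‖z‖ ^ (-c)) μ)
    (hf : ∀ y, |f x - f y| ≤ M * min ‖x - y‖ a) :
    Integrable (fun y => (f x - f y) / ‖x - y‖ ^ c) μ :=
  ((hk.comp_sub_right x).const_mul M).mono'
    (by fun_prop : Measurable fun y => (f x - f y) / ‖x - y‖ ^ c).aestronglyMeasurable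
    (.of_forall fun y => (Real.norm_eq_abs _).trans_le (abs_sub_div_norm_rpow_le (hf y)))

lemma abs_integral_sub_div_norm_rpow_le
    (hk : Integrable (fun z : E => min ‖z‖ a * ‖z‖ ^ (-c)) μ)
    (hf : ∀ y, |f x - f y| ≤ M * min ‖x - y‖ a) :
    |∫ y, (f x - f y) / ‖x - y‖ ^ c ∂μ| ≤ M * ∫ z, min ‖z‖ a * ‖z‖ ^ (-c) ∂μ := by
  have h := norm_integral_le_of_norm_le ((hk.comp_sub_right x).const_mul M) (.of_forall fun y =>
    (Real.norm_eq_abs _).trans_le (abs_sub_div_norm_rpow_le (c := c) (hf y)))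
  rwa [integral_const_mul, integral_sub_right_eq_self
    (fun z : E => min ‖z‖ a * ‖z‖ ^ (-c)) x] at h

end Translation

section Haar

variable [NormedSpace ℝ E] [FiniteDimensional ℝ E] [MeasurableSpace E] [BorelSpace E]
  {μ : Measure E} [μ.IsAddHaarMeasure]

lemma integrableOn_compl_ball_norm_rpow_neg {c : ℝ} (hc : finrank ℝ E < c) :
    IntegrableOn (fun z : E => ‖z‖ ^ (-c)) (ball 0 1)ᶜ μ := by
  have hc0 : 0 ≤ c := (Nat.cast_nonneg _).trans hc.le
  refine ((integrable_one_add_norm hc).const_mul (2 ^ c)).integrableOn.mono'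
    (by fun_prop : Measurable fun z : E => ‖z‖ ^ (-c)).aestronglyMeasurable
    ((ae_restrict_iff' measurableSet_ball.compl).2 (.of_forall fun z hz => ?_))
  have hz : 1 ≤ ‖z‖ := by simpa using hz
  calc ‖‖z‖ ^ (-c)‖ = 2 ^ c * (2 * ‖z‖) ^ (-c) := by
        rw [Real.norm_of_nonneg (by positivity), Real.mul_rpow zero_le_two (norm_nonneg z),
          ← mul_assoc, ← Real.rpow_add two_pos, add_neg_cancel, Real.rpow_zero, one_mul]
    _ ≤ 2 ^ c * (1 + ‖z‖) ^ (-c) :=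
        mul_le_mul_of_nonneg_left
          (Real.rpow_le_rpow_of_nonpos (by positivity) (by linarith) (by linarith)) (by positivity)

lemma integrable_min_norm_mul_norm_rpow_neg (hd : 1 ≤ finrank ℝ E) {a c : ℝ} (ha : 0 ≤ a)
    (hc : finrank ℝ E < c) (hc' : c < finrank ℝ E + 1) :
    Integrable (fun z : E => min ‖z‖ a * ‖z‖ ^ (-c)) μ := by
  have hmeas : AEStronglyMeasurable (fun z : E => min ‖z‖ a * ‖z‖ ^ (-c)) μ :=
    (by fun_prop : Measurable fun z : E => min ‖z‖ a * ‖z‖ ^ (-c)).aestronglyMeasurable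
  rw [← integrableOn_univ, ← union_compl_self (ball (0 : E) 1)]
  refine .union (integrableOn_ball_of_norm_le_rpow hd (C := 1) (α := c - 1) (by linarith)
    (.of_forall fun z => ?_) hmeas) ?_
  · have h1c : 1 + -c ≠ 0 := by
      have : (1 : ℝ) ≤ finrank ℝ E := by exact_mod_cast hd
      linarith
    rw [Real.norm_of_nonneg (by positivity), one_mul, neg_sub', sub_neg_eq_add, add_comm,
      Real.rpow_one_add' (norm_nonneg z) h1c]
    gcongr
    exact min_le_left _ _
  · refine ((integrableOn_compl_ball_norm_rpow_neg hc).const_mul a).mono' hmeas.restrict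
      (.of_forall fun z => ?_)
    rw [Real.norm_of_nonneg (by positivity)]
    gcongr
    exact min_le_right _ _

lemma norm_rpow_mul_abs_integral_sub_div_norm_rpow_le {f : E → ℝ} {M R c : ℝ} (hc : 0 ≤ c)
    (hR : 0 ≤ R) (hM : ∀ y, |f y| ≤ M) (hf : Function.support f ⊆ closedBall 0 R) {x : E}
    (hx : 2 * R < ‖x‖) :
    ‖x‖ ^ c * |∫ y, (f x - f y) / ‖x - y‖ ^ c ∂μ| ≤ 2 ^ c * M * μ.real (closedBall 0 R) := by
  have hfx : f x = 0 := Function.notMem_support.1 fun h => by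
    have := mem_closedBall_zero_iff.1 (hf h)
    linarith
  have hbound : ∀ y, ‖‖x‖ ^ c * ((f x - f y) / ‖x - y‖ ^ c)‖ ≤
      (closedBall (0 : E) R).indicator (fun _ => 2 ^ c * M) y := by
    intro y
    by_cases hy : y ∈ closedBall (0 : E) R
    · have hxy : ‖x‖ ≤ 2 * ‖x - y‖ := by
        linarith [norm_sub_norm_le x y, mem_closedBall_zero_iff.1 hy]
      have hdiv : ‖x‖ ^ c / ‖x - y‖ ^ c ≤ 2 ^ c := by
        refine div_le_of_le_mul₀ (by positivity) (by positivity) ?_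
        rw [← Real.mul_rpow zero_le_two (norm_nonneg _)]
        exact Real.rpow_le_rpow (norm_nonneg _) hxy hc
      rw [indicator_of_mem hy, hfx, zero_sub, neg_div, mul_neg, norm_neg, Real.norm_eq_abs,
        abs_mul, abs_div, abs_of_nonneg (by positivity : 0 ≤ ‖x‖ ^ c),
        abs_of_nonneg (by positivity : 0 ≤ ‖x - y‖ ^ c), mul_div_left_comm, mul_comm (2 ^ c) M]
      exact mul_le_mul (hM y) hdiv (by positivity) ((abs_nonneg _).trans (hM y))
    · rw [indicator_of_notMem hy, Function.notMem_support.1 fun h => hy (hf h), hfx]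
      simp
  have h := norm_integral_le_of_norm_le
    ((integrableOn_const (μ := μ) measure_closedBall_lt_top.ne).integrable_indicator
      measurableSet_closedBall) (.of_forall hbound)
  rwa [integral_indicator_const _ measurableSet_closedBall, smul_eq_mul, integral_const_mul,
    Real.norm_eq_abs, abs_mul, abs_of_nonneg (by positivity), mul_comm _ (2 ^ c * M)] at h

end Haar

/-- For `n ≥ 1`, `0 < α < 1`, and a compact set `K ⊂ ℝⁿ`, there is a
constant `C = C(K,α,n) > 0` such that for every `φ ∈ C_c^∞(ℝⁿ)` with `supp φ ⊆ K` and
every `x ∈ ℝⁿ`, the integral `∫ (φ(x) − φ(y))/|x−y|^{n+α} dy` is absolutely convergent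
and `(1 + |x|^{n+α})·|∫ (φ(x) − φ(y))/|x−y|^{n+α} dy| ≤ C‖φ‖_{C²}`, where the `C²` norm
is the supremum over `ℝⁿ` of the derivatives of `φ` up to order `2`. -/
theorem fractional_laplacian_decay (n : ℕ) (hn : 1 ≤ n) (α : ℝ) (h0 : 0 < α) (h1 : α < 1)
    (K : Set (EuclideanSpace ℝ (Fin n))) (hK : IsCompact K) :
    ∃ C > 0, ∀ φ : EuclideanSpace ℝ (Fin n) → ℝ,
      ContDiff ℝ (⊤ : ℕ∞) φ → HasCompactSupport φ → tsupport φ ⊆ K →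
      ∀ x : EuclideanSpace ℝ (Fin n),
        Integrable (fun y : EuclideanSpace ℝ (Fin n) =>
          (φ x - φ y) / ‖x - y‖ ^ ((n : ℝ) + α)) ∧
        (1 + ‖x‖ ^ ((n : ℝ) + α)) *
            |∫ y : EuclideanSpace ℝ (Fin n), (φ x - φ y) / ‖x - y‖ ^ ((n : ℝ) + α)| ≤
          C * (⨆ i : Fin 3, ⨆ z : EuclideanSpace ℝ (Fin n),
            ‖iteratedFDeriv ℝ (i : ℕ) φ z‖) := by
  set c : ℝ := n + α
  have hc : 0 ≤ c := by positivity
  have hk := integrable_min_norm_mul_norm_rpow_neg (μ := volume) (E := EuclideanSpace ℝ (Fin n))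
    (by rwa [finrank_euclideanSpace_fin]) zero_le_two (c := c)
    (by simp [c, h0]) (by simp [c, h1])
  set I := ∫ z : EuclideanSpace ℝ (Fin n), min ‖z‖ 2 * ‖z‖ ^ (-c)
  have hI : 0 ≤ I := integral_nonneg fun z => by positivity
  obtain ⟨R₀, hR₀⟩ := hK.isBounded.subset_closedBall 0
  set R := max R₀ 1
  have hR : 1 ≤ R := le_max_right R₀ 1
  have hKR : K ⊆ closedBall 0 R := hR₀.trans (closedBall_subset_closedBall (le_max_left R₀ 1))
  set V := volume.real (closedBall (0 : EuclideanSpace ℝ (Fin n)) R)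
  refine ⟨(1 + (2 * R) ^ c) * I + 2 * 2 ^ c * V + 1, by positivity, fun φ hφ hφc hφK x => ?_⟩
  set M := ⨆ i : Fin 3, ⨆ z, ‖iteratedFDeriv ℝ (i : ℕ) φ z‖
  have hφM := norm_iteratedFDeriv_le_iSup (k := 3) (hφ.of_le (WithTop.coe_le_coe.2 le_top)) hφc
  have h₀ : ∀ z, |φ z| ≤ M := fun z => by simpa using hφM 0 z
  have h₁ : ∀ z, ‖fderiv ℝ φ z‖ ≤ M := fun z => by simpa using hφM 1 z
  have hM : 0 ≤ M := (abs_nonneg _).trans (h₀ x)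
  have hφx := abs_sub_le_mul_min_norm_sub (hφ.differentiable (by simp)) h₀ h₁ x
  refine ⟨integrable_sub_div_norm_rpow hφ.continuous hk hφx, ?_⟩
  rcases le_or_gt ‖x‖ (2 * R) with hnear | hfar
  · have := abs_integral_sub_div_norm_rpow_le hk hφx
    calc _ ≤ (1 + (2 * R) ^ c) * (M * I) := by gcongr
      _ ≤ _ := by nlinarith [mul_nonneg hM (by positivity : 0 ≤ 2 * 2 ^ c * V)]
  · have hx : 1 ≤ ‖x‖ ^ c := Real.one_le_rpow (by linarith) hc
    have := norm_rpow_mul_abs_integral_sub_div_norm_rpow_le (μ := volume) hc (by linarith) h₀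
      ((subset_tsupport φ).trans (hφK.trans hKR)) hfar
    calc _ ≤ 2 * (‖x‖ ^ c * |∫ y, (φ x - φ y) / ‖x - y‖ ^ c|) := by
          nlinarith [abs_nonneg (∫ y, (φ x - φ y) / ‖x - y‖ ^ c)]
      _ ≤ 2 * (2 ^ c * M * V) := by gcongr
      _ ≤ _ := by nlinarith [mul_nonneg hM (mul_nonneg (by positivity : 0 ≤ 1 + (2 * R) ^ c) hI)]
end

section
/- Let 0 < α < 2. For every real x ≠ 0 and every y ∈ ℝ, the function H₁(x,y) = −|x|^{α−2}·y + ∫₀^y (x² + s²)^{(α−2)/2} ds satisfies |H₁(x,y)| ≤ ((2−α)/6)·|y|³·|x|^{α−4}. (In particular, for fixed y, H₁(x,y) = O(|x|^{α−4}) as |x| → ∞, which is the decay estimate guaranteeing convergence of the nonlinear terms in the regularized two-front GSQG contour dynamics equations.) -/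
/-!
For `x ≠ 0` the integrand `(x² + s²)^((α-2)/2)` differs from its value `|x|^(α-2)` at `s = 0` by
at most `(2-α)/2 · |x|^(α-4) · s²`: this is the mean value theorem for `t ↦ t^((α-2)/2)` on
`[x², x² + s²]`, whose derivative is largest in absolute value at the left endpoint.
Integrating this quadratic bound from `0` to `y` gives the cubic bound on `H₁`.
-/

open MeasureTheory intervalIntegral

namespace Real

theorem abs_rpow_sub_rpow_le {A p a b : ℝ} (hA : 0 < A) (hp : p ≤ 1) (ha : A ≤ a)
    (hb : A ≤ b) : |b ^ p - a ^ p| ≤ |p| * A ^ (p - 1) * |b - a| := by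
  simp only [← norm_eq_abs]
  refine (convex_Ici A).norm_image_sub_le_of_norm_hasDerivWithin_le
    (f := fun t => t ^ p) (f' := fun t => p * t ^ (p - 1)) (fun t ht => ?_) (fun t ht => ?_) ha hb
  · exact (hasDerivAt_rpow_const (Or.inl (hA.trans_le ht).ne')).hasDerivWithinAt
  · rw [norm_mul, norm_of_nonneg (rpow_pos_of_pos (hA.trans_le ht) _).le]
    exact mul_le_mul_of_nonneg_left (rpow_le_rpow_of_nonpos hA ht (by linarith)) (norm_nonneg p)

theorem sq_rpow (x p : ℝ) : (x ^ 2) ^ p = |x| ^ (2 * p) := by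
  rw [← sq_abs, ← rpow_natCast_mul (abs_nonneg x)]
  norm_num

end Real

open Real

theorem abs_rpow_sq_add_sq_sub_le {x : ℝ} (hx : x ≠ 0) {α : ℝ} (hα : α ≤ 2) (s : ℝ) :
    |(x ^ 2 + s ^ 2) ^ ((α - 2) / 2) - |x| ^ (α - 2)| ≤ (2 - α) / 2 * |x| ^ (α - 4) * s ^ 2 := by
  have key := abs_rpow_sub_rpow_le (p := (α - 2) / 2) (by positivity : 0 < x ^ 2)
    (by linarith) le_rfl (le_add_of_nonneg_right (sq_nonneg s))
  rwa [sq_rpow, sq_rpow, add_sub_cancel_left, abs_of_nonneg (sq_nonneg s),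
    abs_of_nonpos (show (α - 2) / 2 ≤ 0 by linarith), show 2 * ((α - 2) / 2) = α - 2 by ring,
    show 2 * ((α - 2) / 2 - 1) = α - 4 by ring, show -((α - 2) / 2) = (2 - α) / 2 by ring] at key

theorem norm_integral_le_of_norm_le_mul_sq {E : Type*} [NormedAddCommGroup E] [NormedSpace ℝ E]
    {f : ℝ → E} {C : ℝ} (hf : ∀ s, ‖f s‖ ≤ C * s ^ 2) (y : ℝ) :
    ‖∫ s in (0 : ℝ)..y, f s‖ ≤ C / 3 * |y| ^ 3 := by
  have hC : 0 ≤ C := by simpa using (norm_nonneg _).trans (hf 1)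
  calc ‖∫ s in (0 : ℝ)..y, f s‖
      ≤ |∫ s in (0 : ℝ)..y, C * s ^ 2| :=
        norm_integral_le_abs_of_norm_le (ae_of_all _ hf)
          ((by fun_prop : Continuous fun s : ℝ => C * s ^ 2).intervalIntegrable _ _)
    _ = C / 3 * |y| ^ 3 := by
        rw [intervalIntegral.integral_const_mul, integral_pow]
        norm_num [abs_mul, abs_div, abs_of_nonneg hC, abs_pow]
        ring

theorem H1_bound_general (α : ℝ) (h2 : α < 2) (x y : ℝ) (hx : x ≠ 0) :
    |(-(|x| ^ (α - 2)) * y + ∫ s in (0 : ℝ)..y, (x ^ 2 + s ^ 2) ^ ((α - 2) / 2))| ≤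
      ((2 - α) / 6) * |y| ^ 3 * |x| ^ (α - 4) := by
  have hintegrable : IntervalIntegrable (fun s : ℝ => (x ^ 2 + s ^ 2) ^ ((α - 2) / 2)) volume 0 y :=
    (continuous_const.add (continuous_pow 2)).rpow_const
      (fun s => Or.inl (by positivity : x ^ 2 + s ^ 2 ≠ 0)) |>.intervalIntegrable _ _
  have hH₁ : -(|x| ^ (α - 2)) * y + ∫ s in (0 : ℝ)..y, (x ^ 2 + s ^ 2) ^ ((α - 2) / 2) =
      ∫ s in (0 : ℝ)..y, ((x ^ 2 + s ^ 2) ^ ((α - 2) / 2) - |x| ^ (α - 2)) := by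
    rw [integral_sub hintegrable intervalIntegrable_const, intervalIntegral.integral_const, smul_eq_mul]
    ring
  rw [hH₁, ← norm_eq_abs]
  calc _ ≤ (2 - α) / 2 * |x| ^ (α - 4) / 3 * |y| ^ 3 :=
        norm_integral_le_of_norm_le_mul_sq (abs_rpow_sq_add_sq_sub_le hx h2.le) y
    _ = (2 - α) / 6 * |y| ^ 3 * |x| ^ (α - 4) := by ring

/-- For `0 < α < 2`, `x ≠ 0`, and `y ∈ ℝ`, the function
`H₁(x,y) = −|x|^{α−2}·y + ∫₀^y (x² + s²)^{(α−2)/2} ds` satisfies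
`|H₁(x,y)| ≤ ((2−α)/6)·|y|³·|x|^{α−4}`. -/
theorem H1_bound (α : ℝ) (h0 : 0 < α) (h2 : α < 2) (x y : ℝ) (hx : x ≠ 0) :
    |(-(|x| ^ (α - 2)) * y + ∫ s in (0 : ℝ)..y, (x ^ 2 + s ^ 2) ^ ((α - 2) / 2))| ≤
      ((2 - α) / 6) * |y| ^ 3 * |x| ^ (α - 4) :=
  H1_bound_general α h2 x y hx
end
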